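/- arXiv:2007.06438 — 2 statements merged into one kernel-verified Lean document; each statement's English description precedes it below -/
import Mathlib

section
/- In any graph G, each prune-equivalence class of walks contains a unique non-prunable representative: if α and β are non-prunable walks that are prune-equivalent, then α = β. -/
/-- A graph: vertex type `V` with a symmetric adjacency relation (loops allowed). -/
structure Graph' (V : Type) where
  Adj : V → V → Prop
  symm : Symmetric Adj

variable {V W X : Type}

/-- `l` is the (nonempty) vertex sequence of a walk in `G`. -/
def IsWalk (G : Graph' V) (l : List V) : Prop :=
  l ≠ [] ∧ l.Chain' G.Adj

/-- `l` is a walk in `G` from `x` to `y`. -/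
def IsWalkFrom (G : Graph' V) (x y : V) (l : List V) : Prop :=
  l.Chain' G.Adj ∧ l.head? = some x ∧ l.getLast? = some y

/-- Concatenation of walks sharing an endpoint: follow `l`, then `m`. -/
def wconcat (l m : List V) : List V := l ++ m.tail

/-- A walk is prunable if some vertex `vᵢ` satisfies `vᵢ = vᵢ₊₂`. -/
def Prunable (l : List V) : Prop :=
  ∃ (p s : List V) (a b : V), l = p ++ a :: b :: a :: s

/-- `m` is obtained from `l` by a single prune (deleting `vᵢ, vᵢ₊₁` when `vᵢ = vᵢ₊₂`). -/
def PruneOf (l m : List V) : Prop :=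
  ∃ (p s : List V) (a b : V), l = p ++ a :: b :: a :: s ∧ m = p ++ a :: s

/-- A single prune step (in either direction) between walks of `G`. -/
def PruneStep (G : Graph' V) (l m : List V) : Prop :=
  IsWalk G l ∧ IsWalk G m ∧ (PruneOf l m ∨ PruneOf m l)

/-- Prune equivalence: the equivalence relation on walks of `G` generated by prunes. -/
def PruneEqv (G : Graph' V) : List V → List V → Prop :=
  Relation.EqvGen (PruneStep G)

/-- A spider move: two walks of `G` of the same length which agree at every index
except (at most) a single interior index. -/
def SpiderStep (G : Graph' V) (l m : List V) : Prop :=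
  IsWalk G l ∧ IsWalk G m ∧ l.length = m.length ∧
    ∃ i : ℕ, 0 < i ∧ i + 1 < l.length ∧ ∀ j : ℕ, j ≠ i → l[j]? = m[j]?

/-- Homotopy rel endpoints (`≡`): the equivalence relation on walks of `G`
generated by prunes and spider moves. -/
def HomEqv (G : Graph' V) : List V → List V → Prop :=
  Relation.EqvGen (fun l m => PruneStep G l m ∨ SpiderStep G l m)

/-- A graph morphism. -/
def IsHom (G : Graph' V) (H : Graph' W) (f : V → W) : Prop :=
  ∀ {u v : V}, G.Adj u v → H.Adj (f u) (f v)

/-- One step of a ×-homotopy between graph morphisms. -/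
def HtpyStep (G : Graph' V) (H : Graph' W) (f g : V → W) : Prop :=
  IsHom G H f ∧ IsHom G H g ∧ ∀ u v, G.Adj u v → H.Adj (f u) (g v)

/-- ×-homotopy of graph morphisms. -/
def Homotopic (G : Graph' V) (H : Graph' W) : (V → W) → (V → W) → Prop :=
  Relation.ReflTransGen (HtpyStep G H)
/-!
Pruning is a confluent rewriting system: two prunes of the same walk either give the same walk or,
when they act at different places, can each be followed by one more prune to reach a common walk.
By Church–Rosser, prune-equivalent walks therefore prune down to a common walk, and a non-prunable
walk can only prune down to itself.
-/

open Relation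

/-- The second prune acts `t.length` positions to the right of the first. -/
lemma pruneOf_join_of_append {p₁ s₁ s₂ t : List V} {a₁ b₁ a₂ b₂ : V}
    (ht : a₁ :: b₁ :: a₁ :: s₁ = t ++ a₂ :: b₂ :: a₂ :: s₂) :
    ∃ n, ReflGen PruneOf (p₁ ++ a₁ :: s₁) n ∧ ReflGen PruneOf (p₁ ++ t ++ a₂ :: s₂) n := by
  match t, ht with
  | [], ht =>
    simp only [List.nil_append, List.cons.injEq] at ht
    obtain ⟨rfl, -, -, rfl⟩ := ht
    exact ⟨_, .refl, by simpa using .refl⟩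
  | [x], ht =>
    simp only [List.cons_append, List.nil_append, List.cons.injEq] at ht
    obtain ⟨rfl, rfl, rfl, rfl⟩ := ht
    exact ⟨_, .refl, by simpa using .refl⟩
  | [x, y], ht =>
    simp only [List.cons_append, List.nil_append, List.cons.injEq] at ht
    obtain ⟨rfl, rfl, rfl, rfl⟩ := ht
    exact ⟨p₁ ++ a₁ :: s₂, .single ⟨p₁, s₂, a₁, b₂, rfl, rfl⟩,
      .single ⟨p₁, s₂, a₁, b₁, by simp, rfl⟩⟩
  | x :: y :: z :: t', ht =>
    simp only [List.cons_append, List.cons.injEq] at ht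
    obtain ⟨rfl, rfl, rfl, rfl⟩ := ht
    exact ⟨p₁ ++ a₁ :: (t' ++ a₂ :: s₂),
      .single ⟨p₁ ++ a₁ :: t', s₂, a₂, b₂, by simp, by simp⟩,
      .single ⟨p₁, t' ++ a₂ :: s₂, a₁, b₁, by simp, rfl⟩⟩

lemma pruneOf_diamond {l m₁ m₂ : List V} (h₁ : PruneOf l m₁) (h₂ : PruneOf l m₂) :
    ∃ n, ReflGen PruneOf m₁ n ∧ ReflGen PruneOf m₂ n := by
  obtain ⟨p₁, s₁, a₁, b₁, rfl, rfl⟩ := h₁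
  obtain ⟨p₂, s₂, a₂, b₂, hl, rfl⟩ := h₂
  rcases List.append_eq_append_iff.mp hl with ⟨t, rfl, ht⟩ | ⟨t, rfl, ht⟩
  · exact pruneOf_join_of_append ht
  · obtain ⟨n, hn₂, hn₁⟩ := pruneOf_join_of_append (p₁ := p₂) ht
    exact ⟨n, hn₁, hn₂⟩

lemma join_reflTransGen_pruneOf_of_eqvGen {l m : List V} (h : EqvGen PruneOf l m) :
    Join (ReflTransGen PruneOf) l m :=
  have hequiv : Equivalence (Join (ReflTransGen (@PruneOf V))) :=
    equivalence_join_reflTransGen fun _ _ _ h₁ h₂ ↦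
      (pruneOf_diamond h₁ h₂).imp fun _ hn ↦ ⟨hn.1, hn.2.to_reflTransGen⟩
  hequiv.eqvGen_iff.mp (EqvGen.mono (fun _ _ ↦ le_join_of_refl _ _ ∘ .single) _ _ h)

lemma PruneEqv.eqvGen_pruneOf {G : Graph' V} {l m : List V} (h : PruneEqv G l m) :
    EqvGen PruneOf l m :=
  EqvGen.eqvGen_symmGen (r := PruneOf) ▸ EqvGen.mono (fun _ _ hlm ↦ hlm.2.2) _ _ h

lemma eq_of_reflTransGen_pruneOf {l m : List V} (hl : ¬ Prunable l)
    (h : ReflTransGen PruneOf l m) : l = m := by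
  rcases h.cases_head with rfl | ⟨_, ⟨p, s, a, b, hl', -⟩, -⟩
  · rfl
  · exact absurd ⟨p, s, a, b, hl'⟩ hl

theorem stmt1_general (G : Graph' V) (α β : List V)
    (h : PruneEqv G α β) (hnα : ¬ Prunable α) (hnβ : ¬ Prunable β) : α = β := by
  obtain ⟨γ, hαγ, hβγ⟩ := join_reflTransGen_pruneOf_of_eqvGen h.eqvGen_pruneOf
  rw [eq_of_reflTransGen_pruneOf hnα hαγ, eq_of_reflTransGen_pruneOf hnβ hβγ]

/-- each prune-equivalence class of walks has a unique non-prunable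
representative. -/
theorem stmt1 (G : Graph' V) (α β : List V) (hα : IsWalk G α) (hβ : IsWalk G β)
    (h : PruneEqv G α β) (hnα : ¬ Prunable α) (hnβ : ¬ Prunable β) : α = β :=
  stmt1_general G α β h hnα hnβ
end

section
/- Let α = (v₀ … vₙ) be a walk in a graph G that is prunable at i, so vᵢ = vᵢ₊₂. Then α is homotopic rel endpoints (connected by a finite sequence of spider moves, without changing length) to the walk (v₀ … vᵢ₋₁ vᵢ vᵢ₊₃ … vₙ vₙ₋₁ vₙ) obtained by deleting the repeated pair vᵢ₊₁, vᵢ₊₂ and appending the final edge twice at the end. -/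
variable {V W X : Type}

/-!
If `s = x :: s'`, the vertex `b` sits between two copies of `a` and `a ∼ x`, so a spider move
replaces it by `x`. The result `p ++ a :: x :: a :: x :: s'` is prunable one index
further to the right, so induction on `s` pushes the backtrack `a b a` to the end of the walk,
where it becomes the final edge traversed twice.
-/

theorem spiderStep_set (G : Graph' V) {l : List V} {i : ℕ} {y : V} (hl : IsWalk G l)
    (hl' : IsWalk G (l.set i y)) (hi₀ : 0 < i) (hi : i + 1 < l.length) :
    SpiderStep G l (l.set i y) :=
  ⟨hl, hl', (List.length_set ..).symm, i, hi₀, hi, fun _ hj => (List.getElem?_set_ne hj.symm).symm⟩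

theorem IsWalk.replace_backtrack {G : Graph' V} {p s : List V} {a b x : V}
    (hw : IsWalk G (p ++ a :: b :: a :: x :: s)) : IsWalk G (p ++ a :: x :: a :: x :: s) := by
  have hc : (p ++ a :: b :: a :: x :: s).IsChain G.Adj := hw.2
  obtain ⟨hp, -, -, hax, hxs⟩ :
      (p ++ [a]).IsChain G.Adj ∧ G.Adj a b ∧ G.Adj b a ∧ G.Adj a x ∧ (x :: s).IsChain G.Adj := by
    simpa using hc
  exact ⟨by simp, show List.IsChain _ _ by simp [hp, hax, G.symm hax, hxs]⟩

theorem spider_eqvGen_backtrack_to_end (G : Graph' V) {c d : V} :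
    ∀ (s p : List V) (a b : V), IsWalk G (p ++ a :: b :: a :: s) → [c, d] <:+ b :: a :: s →
      Relation.EqvGen (SpiderStep G) (p ++ a :: b :: a :: s) (p ++ a :: s ++ [c, d])
  | [], p, a, b, _, hcd => by
    rw [hcd.eq_of_length rfl]
    simpa using Relation.EqvGen.refl _
  | x :: s, p, a, b, hw, hcd => by
    have hcd' : [c, d] <:+ a :: x :: s := by
      rcases List.suffix_cons_iff.mp hcd with h | h
      · simpa using congrArg List.length h
      · exact h
    have hmove : SpiderStep G (p ++ a :: b :: a :: x :: s) (p ++ a :: x :: a :: x :: s) := by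
      have hset : (p ++ a :: b :: a :: x :: s).set (p.length + 1) x =
          p ++ a :: x :: a :: x :: s := by simp
      rw [← hset]
      exact spiderStep_set G hw (hset ▸ hw.replace_backtrack) (by omega) (by simp; omega)
    have ih := spider_eqvGen_backtrack_to_end G s (p ++ [a]) x a
      (by simpa using hw.replace_backtrack) hcd'
    exact (Relation.EqvGen.rel _ _ hmove).trans _ _ _ (by simpa using ih)

/-- a walk prunable at `i` is connected by a finite sequence of spider
moves (rel endpoints, without changing length) to the walk obtained by deleting the
repeated pair and appending the final edge twice at the end. -/
theorem stmt9 (G : Graph' V) (p s q : List V) (a b c d : V)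
    (hw : IsWalk G (p ++ a :: b :: a :: s))
    (hq : p ++ a :: b :: a :: s = q ++ [c, d]) :
    Relation.EqvGen (SpiderStep G) (p ++ a :: b :: a :: s) ((p ++ a :: s) ++ [c, d]) := by
  have hcd : [c, d] <:+ b :: a :: s :=
    List.suffix_of_suffix_length_le (hq ▸ List.suffix_append q [c, d])
      (by simpa using List.suffix_append (p ++ [a]) (b :: a :: s)) (by simp)
  exact spider_eqvGen_backtrack_to_end G s p a b hw hcd
end
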